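/- arXiv:1507.01091 — 2 statements merged into one kernel-verified Lean document; each statement's English description precedes it below -/
import Mathlib

section
/- Let q = y² + a·y + b ∈ K[x][y] with a, b ∈ K[x], and assume that deg_x(a² − 4b) is odd. Then for any p ∈ K[x][y], the resultant Res_y(p, q) lies in K if and only if p = α·q + β for some α ∈ K[x][y] and β ∈ K. -/
open Polynomial

noncomputable section

namespace DiscPaper

variable {K : Type*} [Field K]

/-- The partial degree in `x` of a bivariate polynomial `f ∈ K[x][y]`
(inner variable `x`, outer variable `y`). -/
def degX (f : Polynomial (Polynomial K)) : ℕ :=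
  f.support.sup fun j => (f.coeff j).natDegree

/-- The Sylvester matrix of `f` (regarded as having degree `m`) and `g` (regarded as having
degree `n`): `n` rows of shifted coefficients of `f` and `m` rows of shifted coefficients
of `g`. -/
def sylvesterAux {R : Type*} [CommRing R] (m n : ℕ) (f g : Polynomial R) :
    Matrix (Fin (n + m)) (Fin (n + m)) R :=
  Matrix.of fun i j =>
    if (i : ℕ) < n then
      (if (i : ℕ) ≤ (j : ℕ) ∧ (j : ℕ) ≤ (i : ℕ) + m then f.coeff (m + (i : ℕ) - (j : ℕ)) else 0)
    else
      (if (i : ℕ) - n ≤ (j : ℕ) ∧ (j : ℕ) ≤ ((i : ℕ) - n) + n then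
        g.coeff (n + ((i : ℕ) - n) - (j : ℕ)) else 0)

/-- The resultant of two polynomials, as the determinant of their Sylvester matrix. -/
def resultant {R : Type*} [CommRing R] (f g : Polynomial R) : R :=
  (sylvesterAux f.natDegree g.natDegree f g).det

/-- The generic polynomial of degree `d`, with indeterminate coefficients. -/
def genPoly (d : ℕ) : Polynomial (MvPolynomial (Fin (d + 1)) ℤ) :=
  ∑ j : Fin (d + 1), Polynomial.C (MvPolynomial.X j) * Polynomial.X ^ (j : ℕ)

open scoped Classical in
/-- The universal discriminant in degree `d`: the unique polynomial `D` in the indeterminate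
coefficients `a_0, …, a_d` such that `a_d * D = (-1)^(d(d-1)/2) * Res(f, f')` for the generic
polynomial `f` of degree `d`. -/
def discUniv (d : ℕ) : MvPolynomial (Fin (d + 1)) ℤ :=
  if d = 0 then 1
  else if h : ∃ D, MvPolynomial.X (Fin.last d) * D =
      (-1) ^ (d * (d - 1) / 2) *
        (sylvesterAux d (d - 1) (genPoly d) (Polynomial.derivative (genPoly d))).det
  then h.choose else 0

/-- The discriminant of a polynomial `f ∈ R[y]`: the universal discriminant of degree
`natDegree f` evaluated at the coefficients of `f`. -/
def disc {R : Type*} [CommRing R] (f : Polynomial R) : R :=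
  MvPolynomial.aeval (fun j : Fin (f.natDegree + 1) => f.coeff (j : ℕ)) (discUniv f.natDegree)

/-- Substitution of `p` for `x` and `q` for `y` in the bivariate polynomial `f ∈ K[x][y]`;
i.e. `f(p, q)`. -/
def subst2 (p q f : Polynomial (Polynomial K)) : Polynomial (Polynomial K) :=
  Polynomial.eval₂ (Polynomial.aeval p).toRingHom q f

/-- The bivariate polynomial `f(y, x)` obtained from `f(x, y)` by exchanging the variables. -/
def swapXY (f : Polynomial (Polynomial K)) : Polynomial (Polynomial K) :=
  subst2 Polynomial.X (Polynomial.C Polynomial.X) f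

/-- `f ∈ K[x][y]` is monic with respect to `y` if its leading coefficient with respect to `y`
is a nonzero constant, i.e. a unit of `K[x]`. -/
def MonicY (f : Polynomial (Polynomial K)) : Prop :=
  IsUnit f.leadingCoeff

/-- `f ∈ K[x][y]` is primitive with respect to `y` if it has no nonconstant factor in `K[x]`. -/
def PrimitiveY (f : Polynomial (Polynomial K)) : Prop :=
  ∀ u : Polynomial K, Polynomial.C u ∣ f → IsUnit u

/-- `f ∈ K[x][y]` is minimal: primitive, irreducible, of `y`-degree at least one, and with
`deg_x Δ_y(f) = d_y - 1`. -/
def Minimal (f : Polynomial (Polynomial K)) : Prop :=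
  PrimitiveY f ∧ Irreducible f ∧ 1 ≤ f.natDegree ∧ (disc f).natDegree = f.natDegree - 1

/-- The coefficient of `x^(degX f)` in `f`, as a polynomial in `y`: the leading coefficient
of `f` with respect to `x`. -/
def leadX (f : Polynomial (Polynomial K)) : Polynomial K :=
  ∑ j ∈ f.support, Polynomial.C ((f.coeff j).coeff (degX f)) * Polynomial.X ^ j

/-- The homogenisation in degree `n` with respect to `y` of `f ∈ K[x][y]`, as a binary form
in `Y₀, Y₁` (the variables `0` and `1` of an `MvPolynomial (Fin 2)`) over `K[x]`. -/
def homY (n : ℕ) (f : Polynomial (Polynomial K)) : MvPolynomial (Fin 2) (Polynomial K) :=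
  ∑ j ∈ Finset.range (n + 1),
    MvPolynomial.C (f.coeff j) * MvPolynomial.X 0 ^ j * MvPolynomial.X 1 ^ (n - j)

/-- The action of a matrix `((a,b),(c,d))` over `K[x]` on binary forms:
`F(Y₀, Y₁) ↦ F(a Y₀ + b Y₁, c Y₀ + d Y₁)`. -/
def gAct (a b c d : Polynomial K) (F : MvPolynomial (Fin 2) (Polynomial K)) :
    MvPolynomial (Fin 2) (Polynomial K) :=
  MvPolynomial.aeval
    ![MvPolynomial.C a * MvPolynomial.X 0 + MvPolynomial.C b * MvPolynomial.X 1,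
      MvPolynomial.C c * MvPolynomial.X 0 + MvPolynomial.C d * MvPolynomial.X 1] F

/-- Two binary forms over `K[x]` are `G`-equivalent, for `G = GL₂(K[x])`, if `F = σ(H)` for
some `σ ∈ G`. -/
def GEquivF (F H : MvPolynomial (Fin 2) (Polynomial K)) : Prop :=
  ∃ a b c d : Polynomial K, IsUnit (a * d - b * c) ∧ F = gAct a b c d H

/-- Two polynomials of `K[x][y]` are `G`-equivalent if their homogenisations with respect to
`y` are `G`-equivalent. -/
def GEquiv (f g : Polynomial (Polynomial K)) : Prop :=
  GEquivF (homY f.natDegree f) (homY g.natDegree g)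

/-- The parameter `a(f)`: the degree in `x` of the coefficient of `y^0` in `f`. -/
def aPar (f : Polynomial (Polynomial K)) : ℕ := (f.coeff 0).natDegree

/-- The parameter `b(f)`: the degree in `x` of the coefficient of `y^(d_y)` in `f`. -/
def bPar (f : Polynomial (Polynomial K)) : ℕ := (f.coeff f.natDegree).natDegree

/-- The parameter `c(f) = min (a(f), b(f))`. -/
def cPar (f : Polynomial (Polynomial K)) : ℕ := min (aPar f) (bPar f)

/-- The generic Newton polytope of `f`: the convex hull of `(0,0)`, `(0, d_y)` and the
support of `f` (a point `(i, j)` for each monomial `x^i y^j` of `f`). -/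
def NPolytope (f : Polynomial (Polynomial K)) : Set (ℝ × ℝ) :=
  convexHull ℝ ({((0 : ℝ), (0 : ℝ)), ((0 : ℝ), (f.natDegree : ℝ))} ∪
    {p : ℝ × ℝ | ∃ i j : ℕ, (f.coeff j).coeff i ≠ 0 ∧ p = ((i : ℝ), (j : ℝ))})

/-- The euclidean area of the generic Newton polytope of `f`. -/
def nvol (f : Polynomial (Polynomial K)) : ℝ :=
  (MeasureTheory.volume (NPolytope f)).toReal

/-- The discriminant of a binary form of degree `d` over `R`: the universal discriminant of
degree `d` evaluated at the coefficients of the form, where the `j`-th coefficient is the one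
of the monomial `Y₀^j Y₁^(d-j)`. -/
def formDisc {R : Type*} [CommRing R] (d : ℕ) (F : MvPolynomial (Fin 2) R) : R :=
  MvPolynomial.aeval
    (fun j : Fin (d + 1) =>
      MvPolynomial.coeff (Finsupp.single (0 : Fin 2) (j : ℕ) + Finsupp.single (1 : Fin 2) (d - (j : ℕ))) F)
    (discUniv d)

/-!
Since `q` is monic, reducing `p` modulo `q` leaves `Res_y(p, q)` unchanged, and for a remainder
`c + d y` the resultant is the norm `c² - a c d + b d²`. Completing the square,
`4 (c² - a c d + b d²) = (2c - a d)² - (a² - 4b) d²`; as `a² - 4b` has odd degree, the two terms on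
the right have degrees of different parity unless `d = 0`, so the norm is constant only if `d = 0`,
and then `c² ∈ K` forces `c ∈ K`.
-/

section

variable {R : Type*} [CommRing R]

theorem sylvesterAux_eq_submatrix_transpose_sylvester (m n : ℕ) (f g : R[X]) :
    sylvesterAux m n f g =
      (sylvester f g m n).transpose.submatrix (Fin.revPerm.trans (finCongr (add_comm n m)))
        (Fin.revPerm.trans (finCongr (add_comm n m))) := by
  ext i j
  rw [Matrix.submatrix_apply, Matrix.transpose_apply]
  generalize hc : (Fin.revPerm.trans (finCongr (add_comm n m))) i = c
  simp only [Equiv.trans_apply, Fin.revPerm_apply, finCongr_apply, Fin.ext_iff, Fin.val_cast,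
    Fin.val_rev] at hc
  induction c using Fin.addCases with
  | left k =>
    simp only [Fin.val_castAdd] at hc
    simp only [sylvesterAux, sylvester, Matrix.of_apply, Fin.addCases_left, Equiv.trans_apply,
      Fin.revPerm_apply, finCongr_apply, Fin.val_cast, Fin.val_rev, Set.mem_Icc]
    split_ifs <;> first | rfl | omega | (congr 1; omega)
  | right k =>
    simp only [Fin.val_natAdd] at hc
    simp only [sylvesterAux, sylvester, Matrix.of_apply, Fin.addCases_right, Equiv.trans_apply,
      Fin.revPerm_apply, finCongr_apply, Fin.val_cast, Fin.val_rev, Set.mem_Icc]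
    split_ifs <;> first | rfl | omega | (congr 1; omega)

theorem resultant_eq_polynomial_resultant (f g : R[X]) :
    resultant f g = Polynomial.resultant f g := by
  rw [resultant, Polynomial.resultant, sylvesterAux_eq_submatrix_transpose_sylvester,
    Matrix.det_submatrix_equiv_self, Matrix.det_transpose]

theorem resultant_eq_of_natDegree_le {f g : R[X]} {k m n : ℕ} (hg : g.coeff n = 1) (hn : Even n)
    (hf : f.natDegree ≤ k) (hkm : k ≤ m) : f.resultant g m n = f.resultant g k n := by
  obtain ⟨j, rfl⟩ := Nat.exists_eq_add_of_le hkm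
  rw [resultant_add_left_deg _ _ _ _ _ hf, hg, one_pow, mul_one, (hn.mul_right j).neg_one_pow,
    one_mul]

theorem resultant_modByMonic {f g : R[X]} {m : ℕ} (hg : g.Monic) (hf : f.natDegree ≤ m)
    (hgm : g.natDegree ≤ m) :
    f.resultant g m g.natDegree = (f %ₘ g).resultant g m g.natDegree := by
  conv_lhs => rw [← modByMonic_add_div f g]
  refine resultant_add_mul_left _ _ _ _ _ ?_ le_rfl
  rw [natDegree_divByMonic f hg]
  omega

theorem natDegree_modByMonic_le_of_natDegree_eq_succ {p q : R[X]} {n : ℕ} (hq : q.Monic)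
    (hqn : q.natDegree = n + 1) : (p %ₘ q).natDegree ≤ n := by
  have := natDegree_modByMonic_lt p hq (by rintro rfl; simp at hqn)
  omega

theorem modByMonic_eq_C_iff {p q : R[X]} (hq : q.Monic) (hq0 : 0 < q.natDegree) (c : R) :
    p %ₘ q = C c ↔ ∃ α, p = α * q + C c := by
  constructor
  · intro h
    exact ⟨p /ₘ q, by rw [← h, mul_comm, add_comm, modByMonic_add_div]⟩
  · rintro ⟨α, rfl⟩
    nontriviality R
    rw [modByMonic_eq_of_dvd_sub hq (by rw [add_sub_cancel_right]; exact dvd_mul_left _ _),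
      modByMonic_eq_self_iff hq]
    exact degree_C_le.trans_lt (by rwa [← natDegree_pos_iff_degree_pos])

theorem monic_X_sq_add_C_mul_X_add_C [Nontrivial R] (a b : R) : (X ^ 2 + C a * X + C b).Monic := by
  monicity!

theorem natDegree_X_sq_add_C_mul_X_add_C [Nontrivial R] (a b : R) :
    (X ^ 2 + C a * X + C b).natDegree = 2 := by
  compute_degree!

/-- The norm of `c + d y` from `R[y] / (y² + a y + b)` down to `R`. -/
def quadNorm (a b c d : R) : R := c ^ 2 - a * c * d + b * d ^ 2

theorem resultant_one_two_quadratic (a b : R) (r : R[X]) :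
    r.resultant (X ^ 2 + C a * X + C b) 1 2 = quadNorm a b (r.coeff 0) (r.coeff 1) := by
  have hsylv : sylvester r (X ^ 2 + C a * X + C b) 1 2 =
      !![b, r.coeff 0, 0; a, r.coeff 1, r.coeff 0; 1, 0, r.coeff 1] := by
    ext i j
    fin_cases i <;> fin_cases j <;> simp [sylvester, Fin.addCases, coeff_X, coeff_C]
  rw [Polynomial.resultant, hsylv, Matrix.det_fin_three, quadNorm]
  simp only [Matrix.of_apply, Matrix.cons_val', Matrix.cons_val_zero, Matrix.cons_val_fin_one,
    Matrix.cons_val_one, Matrix.cons_val]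
  ring

theorem resultant_quadratic [Nontrivial R] {a b : R} {q : R[X]} (hq : q = X ^ 2 + C a * X + C b)
    (p : R[X]) : p.resultant q = quadNorm a b ((p %ₘ q).coeff 0) ((p %ₘ q).coeff 1) := by
  have hqm : q.Monic := hq ▸ monic_X_sq_add_C_mul_X_add_C a b
  have hq2 : q.natDegree = 2 := hq ▸ natDegree_X_sq_add_C_mul_X_add_C a b
  have hq2' : q.coeff 2 = 1 := by rw [← hq2]; exact hqm
  have hr : (p %ₘ q).natDegree ≤ 1 := natDegree_modByMonic_le_of_natDegree_eq_succ hqm hq2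
  calc p.resultant q
      = p.resultant q (p.natDegree + 2) 2 := by
        rw [resultant_eq_of_natDegree_le hq2' even_two le_rfl (by omega), hq2]
    _ = (p %ₘ q).resultant q (p.natDegree + 2) 2 := by
        rw [← hq2]; exact resultant_modByMonic hqm (by omega) (by omega)
    _ = (p %ₘ q).resultant q 1 2 := resultant_eq_of_natDegree_le hq2' even_two hr (by omega)
    _ = _ := by rw [hq]; exact resultant_one_two_quadratic a b _

theorem eq_zero_of_sq_sub_mul_sq_eq_C [IsDomain R] {u v D : R[X]} {k : R} (hD : Odd D.natDegree)
    (h : u ^ 2 - D * v ^ 2 = C k) : v = 0 := by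
  by_contra hv
  have hD0 : D ≠ 0 := by rintro rfl; simp at hD
  have hodd : Odd (D * v ^ 2).natDegree := by
    rw [natDegree_mul hD0 (pow_ne_zero 2 hv), natDegree_pow]
    exact hD.add_even (even_two_mul _)
  have hne : (u ^ 2).natDegree ≠ (D * v ^ 2).natDegree := by
    rw [natDegree_pow]
    exact fun h' => Nat.not_even_iff_odd.mpr hodd (h' ▸ even_two_mul _)
  have hpos : 0 < (u ^ 2 - D * v ^ 2).natDegree := by
    rcases lt_trichotomy (u ^ 2).natDegree (D * v ^ 2).natDegree with hlt | heq | hgt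
    · rw [natDegree_sub_eq_right_of_natDegree_lt hlt]; exact hodd.pos
    · exact absurd heq hne
    · rw [natDegree_sub_eq_left_of_natDegree_lt hgt]; exact hodd.pos.trans hgt
  rw [h, natDegree_C] at hpos
  exact lt_irrefl _ hpos

theorem eq_zero_of_quadNorm_eq_C [IsDomain R] {a b c d : R[X]} {k : R}
    (hodd : Odd (a ^ 2 - 4 * b).natDegree) (h : quadNorm a b c d = C k) : d = 0 :=
  eq_zero_of_sq_sub_mul_sq_eq_C (u := 2 * c - a * d) (k := 4 * k) hodd
    (by rw [C_mul, ← h, map_ofNat, quadNorm]; ring)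

theorem quadNorm_zero_right (a b c : R) : quadNorm a b c 0 = c ^ 2 := by
  rw [quadNorm]; ring

end

theorem resultant_with_quadratic_general
    (a b : Polynomial K) (q : Polynomial (Polynomial K))
    (hq : q = Polynomial.X ^ 2 + Polynomial.C a * Polynomial.X + Polynomial.C b)
    (hodd : Odd (a ^ 2 - 4 * b).natDegree)
    (p : Polynomial (Polynomial K)) :
    (∃ k : K, resultant p q = Polynomial.C k) ↔
      ∃ (α : Polynomial (Polynomial K)) (β : K),
        p = α * q + Polynomial.C (Polynomial.C β) := by
  have hqm : q.Monic := hq ▸ monic_X_sq_add_C_mul_X_add_C a b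
  have hq2 : q.natDegree = 2 := hq ▸ natDegree_X_sq_add_C_mul_X_add_C a b
  rw [exists_comm]
  simp_rw [← modByMonic_eq_C_iff hqm (by omega : 0 < q.natDegree),
    resultant_eq_polynomial_resultant, resultant_quadratic hq]
  have hr : p %ₘ q = C ((p %ₘ q).coeff 1) * X + C ((p %ₘ q).coeff 0) :=
    eq_X_add_C_of_natDegree_le_one (natDegree_modByMonic_le_of_natDegree_eq_succ hqm hq2)
  set c := (p %ₘ q).coeff 0
  set d := (p %ₘ q).coeff 1
  constructor
  · rintro ⟨k, hk⟩
    have hd : d = 0 := eq_zero_of_quadNorm_eq_C hodd hk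
    have hc : c.natDegree = 0 := by
      have := congrArg natDegree hk
      rw [hd, quadNorm_zero_right, natDegree_pow, natDegree_C] at this
      omega
    refine ⟨c.coeff 0, ?_⟩
    rw [hr, hd, ← eq_C_of_natDegree_eq_zero hc, C_0, zero_mul, zero_add]
  · rintro ⟨β, hβ⟩
    refine ⟨β ^ 2, ?_⟩
    simp only [c, d, hβ, coeff_C_zero, coeff_C_succ, quadNorm_zero_right, C_pow]

/-- For `q = y² + a y + b` with `deg_x (a² - 4b)` odd, `Res_y(p, q)` is a
constant iff `p = α q + β` with `β ∈ K`. -/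
theorem resultant_with_quadratic [IsAlgClosed K] [CharZero K]
    (a b : Polynomial K) (q : Polynomial (Polynomial K))
    (hq : q = Polynomial.X ^ 2 + Polynomial.C a * Polynomial.X + Polynomial.C b)
    (hodd : Odd (a ^ 2 - 4 * b).natDegree)
    (p : Polynomial (Polynomial K)) :
    (∃ k : K, resultant p q = Polynomial.C k) ↔
      ∃ (α : Polynomial (Polynomial K)) (β : K),
        p = α * q + Polynomial.C (Polynomial.C β) :=
  resultant_with_quadratic_general a b q hq hodd p

end DiscPaper
end
end

section
/- Let σ = (σ_x, σ_y) ∈ Aut(A²) be a polynomial automorphism with inverse σ⁻¹ = (σ_x⁻¹, σ_y⁻¹). Then deg_y σ_x = deg_y σ_x⁻¹, deg_x σ_y = deg_x σ_y⁻¹, deg_x σ_x = deg_y σ_y⁻¹, and deg_y σ_y = deg_x σ_x⁻¹. Moreover: if deg_y σ_x = 0 then σ_x = ax + b for some a ∈ K*, b ∈ K, and otherwise the leading coefficient of σ_x with respect to y is a nonzero constant of K; if deg_x σ_y = 0 then σ_y = ay + b (a ∈ K*, b ∈ K), otherwise the leading coefficient of σ_y with respect to x is a nonzero constant; if deg_x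 σ_x = 0 then σ_x = ay + b (a ∈ K*, b ∈ K), otherwise the leading coefficient of σ_x with respect to x is a nonzero constant; if deg_y σ_y = 0 then σ_y = ax + b (a ∈ K*, b ∈ K), otherwise the leading coefficient of σ_y with respect to y is a nonzero constant. -/
open Polynomial

noncomputable section

namespace DiscPaper

variable {K : Type*} [Field K]

/-!
Identify `σ` with its comorphism, the `K`-algebra automorphism `e` of `K[x][y]` with
`e x = σ_x`, `e y = σ_y`, `e⁻¹ x = τ_x`, `e⁻¹ y = τ_y`. For `x₀, c ∈ K`, `e` maps the ideal
`(x - c, τ_x - x₀)` onto `(x - x₀, σ_x - c)`, so `K[y]/(σ_x(x₀, y) - c)` and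
`K[y]/(τ_x(c, y) - x₀)` are isomorphic `K`-algebras and these two fibre polynomials have the same
degree. For generic `x₀` and `c` both degrees are full, hence `deg_y σ_x = deg_y τ_x`. If the
leading coefficient of `σ_x` in `y` had a root `x₀`, the left-hand degree would drop while the
right-hand one stays full for generic `c`; so that coefficient is a nonzero constant. If
`deg_y σ_x = 0`, then `σ_x = p(x)` and `τ_x = q(x)` with `p ∘ q = x`, so `p` is linear. Composing
`e` with the exchange of `x` and `y` on either side gives the remaining statements.
-/

open Polynomial.Bivariate

section CommRing

variable {R : Type*} [CommRing R]

theorem coeff_coeff_swap (f : R[X][Y]) (i j : ℕ) :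
    ((swap f).coeff i).coeff j = (f.coeff j).coeff i := by
  induction f using Polynomial.induction_on' with
  | add p q hp hq => simp [hp, hq]
  | monomial n r =>
    induction r using Polynomial.induction_on' with
    | add r s hr hs => simp_all [map_add]
    | monomial k a =>
      simp only [swap_monomial_monomial, coeff_monomial]
      split_ifs <;> simp_all [coeff_monomial]

theorem _root_.AlgHom.apply_C_eq_aeval {B : Type*} [Semiring B] [Algebra R B]
    (φ : R[X][Y] →ₐ[R] B) (p : R[X]) : φ (C p) = aeval (φ (C X)) p :=
  DFunLike.congr_fun (algHom_ext (by simp) : φ.comp CAlgHom = aeval (φ (C X))) p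

theorem exists_eval_ne_zero [IsDomain R] [Infinite R] {p : R[X]} (hp : p ≠ 0) :
    ∃ x, p.eval x ≠ 0 :=
  not_forall.mp <| mt (zero_of_eval_zero _) hp

def fibre (f : R[X][Y]) (x₀ c : R) : R[X] := f.map (evalRingHom x₀) - C c

def fibreIdeal (f : R[X][Y]) (x₀ c : R) : Ideal R[X][Y] := Ideal.span {C (X - C x₀), f - C (C c)}

theorem natDegree_fibre_le (f : R[X][Y]) (x₀ c : R) : (fibre f x₀ c).natDegree ≤ f.natDegree :=
  natDegree_sub_C.trans_le natDegree_map_le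

theorem natDegree_fibre_of_eval_ne_zero {f : R[X][Y]} {x₀ : R} (h : f.leadingCoeff.eval x₀ ≠ 0)
    (c : R) : (fibre f x₀ c).natDegree = f.natDegree :=
  natDegree_sub_C.trans (natDegree_map_of_leadingCoeff_ne_zero _ h)

theorem natDegree_fibre_lt {f : R[X][Y]} {x₀ : R} (hf : f.natDegree ≠ 0)
    (h : f.leadingCoeff.eval x₀ = 0) (c : R) : (fibre f x₀ c).natDegree < f.natDegree :=
  natDegree_sub_C.trans_lt (natDegree_map_lt' h (Nat.pos_of_ne_zero hf))

theorem ker_mapAlgHom_aeval (x₀ : R) :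
    RingHom.ker (mapAlgHom (aeval x₀) : R[X][Y] →ₐ[R] R[X]) = Ideal.span {C (X - C x₀)} := by
  ext h
  rw [RingHom.mem_ker, coe_mapAlgHom, coe_aeval_eq_evalRingHom, ← coe_mapRingHom, ← RingHom.mem_ker,
    ker_mapRingHom, ker_evalRingHom, Ideal.map_span, Set.image_singleton]

def quotientFibreIdealEquiv (f : R[X][Y]) (x₀ c : R) :
    (R[X][Y] ⧸ fibreIdeal f x₀ c) ≃ₐ[R] R[X] ⧸ Ideal.span {fibre f x₀ c} :=
  let φ : R[X][Y] →ₐ[R] R[X] := mapAlgHom (aeval x₀)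
  have hφ : Function.Surjective φ := map_surjective _ fun a => ⟨C a, eval_C⟩
  let ψ := (Ideal.Quotient.mkₐ R (Ideal.span {fibre f x₀ c})).comp φ
  have hker : fibreIdeal f x₀ c = RingHom.ker ψ := by
    have hfib : Ideal.span {fibre f x₀ c} = (Ideal.span {f - C (C c)}).map φ := by
      simp [Ideal.map_span, φ, fibre]
    have hψ : RingHom.ker ψ = (Ideal.span {fibre f x₀ c}).comap φ := by
      ext; simp [ψ, Ideal.Quotient.mkₐ_eq_mk, Ideal.Quotient.eq_zero_iff_mem]
    rw [hψ, hfib, Ideal.comap_map_of_surjective _ hφ, ← RingHom.ker_eq_comap_bot,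
      ker_mapAlgHom_aeval, fibreIdeal, Ideal.span_insert, sup_comm]
  (Ideal.quotientEquivAlgOfEq R hker).trans
    (Ideal.quotientKerAlgEquivOfSurjective ((Ideal.Quotient.mkₐ_surjective R _).comp hφ))

end CommRing

theorem natDegree_eq_of_quotient_algEquiv {P Q : K[X]}
    (e : (K[X] ⧸ Ideal.span {P}) ≃ₐ[K] K[X] ⧸ Ideal.span {Q}) : P.natDegree = Q.natDegree := by
  rw [← finrank_quotient_span_eq_natDegree, ← finrank_quotient_span_eq_natDegree,
    e.toLinearEquiv.finrank_eq]

theorem degX_le_iff {f : K[X][Y]} {n : ℕ} : degX f ≤ n ↔ ∀ j, (f.coeff j).natDegree ≤ n := by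
  refine Finset.sup_le_iff.trans ⟨fun h j => ?_, fun h j _ => h j⟩
  by_cases hj : j ∈ f.support
  · exact h j hj
  · simp [notMem_support_iff.mp hj]

theorem natDegree_swap (f : K[X][Y]) : (swap f).natDegree = degX f := by
  refine eq_of_forall_ge_iff fun n => ?_
  simp only [degX_le_iff, natDegree_le_iff_coeff_eq_zero, Polynomial.ext_iff, coeff_coeff_swap,
    coeff_zero]
  exact ⟨fun h j N hN => h N hN j, fun h N hN j => h j N hN⟩

theorem leadX_eq_leadingCoeff_swap (f : K[X][Y]) : leadX f = (swap f).leadingCoeff := by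
  ext j
  rw [leadingCoeff, natDegree_swap, coeff_coeff_swap, leadX, finsetSum_coeff]
  simp only [coeff_C_mul, coeff_X_pow, mul_ite, mul_one, mul_zero, Finset.sum_ite_eq]
  split_ifs with hj
  · rfl
  · simp [notMem_support_iff.mp hj]

theorem subst2_eq_aevalAeval (p q f : K[X][Y]) : subst2 p q f = aevalAeval p q f := by
  have : (aevalTower (aeval p) q : K[X][Y] →ₐ[K] K[X][Y]) = aevalAeval p q :=
    algHom_ext' (by ext; simp) (by simp)
  exact DFunLike.congr_fun this f

theorem exists_algEquiv_of_subst2 {σx σy τx τy : K[X][Y]}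
    (h1 : subst2 τx τy σx = C X) (h2 : subst2 τx τy σy = Y)
    (h3 : subst2 σx σy τx = C X) (h4 : subst2 σx σy τy = Y) :
    ∃ e : K[X][Y] ≃ₐ[K] K[X][Y], e (C X) = σx ∧ e Y = σy ∧ e.symm (C X) = τx ∧ e.symm Y = τy := by
  simp only [subst2_eq_aevalAeval] at h1 h2 h3 h4
  refine ⟨AlgEquiv.ofAlgHom (aevalAeval σx σy) (aevalAeval τx τy) ?_ ?_, ?_⟩
  · exact algHom_ext' (by ext; simp [h3]) (by simp [h4])
  · exact algHom_ext' (by ext; simp [h1]) (by simp [h2])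
  · simp

section Automorphism

variable (e : K[X][Y] ≃ₐ[K] K[X][Y])

theorem apply_C_X_ne_zero : e (C X) ≠ 0 :=
  (map_ne_zero_iff e e.injective).mpr (C_ne_zero.mpr X_ne_zero)

theorem map_fibreIdeal_symm_apply_C_X (x₀ c : K) :
    (fibreIdeal (e.symm (C X)) c x₀).map e = fibreIdeal (e (C X)) x₀ c := by
  have hC : ∀ a : K, e (C (C a)) = C (C a) := e.commutes
  simp [fibreIdeal, Ideal.map_span, Set.image_pair, hC, Set.pair_comm]

theorem natDegree_fibre_apply_C_X (x₀ c : K) :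
    (fibre (e (C X)) x₀ c).natDegree = (fibre (e.symm (C X)) c x₀).natDegree :=
  natDegree_eq_of_quotient_algEquiv <| (quotientFibreIdealEquiv _ x₀ c).symm.trans <|
    (Ideal.quotientEquivAlg _ _ e (map_fibreIdeal_symm_apply_C_X e x₀ c).symm).symm.trans
      (quotientFibreIdealEquiv _ c x₀)

theorem natDegree_apply_C_X_le [Infinite K] :
    (e (C X)).natDegree ≤ (e.symm (C X)).natDegree := by
  obtain ⟨x₀, hx₀⟩ := exists_eval_ne_zero (leadingCoeff_ne_zero.mpr (apply_C_X_ne_zero e))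
  calc (e (C X)).natDegree = (fibre (e (C X)) x₀ 0).natDegree :=
        (natDegree_fibre_of_eval_ne_zero hx₀ 0).symm
    _ = (fibre (e.symm (C X)) 0 x₀).natDegree := natDegree_fibre_apply_C_X e x₀ 0
    _ ≤ (e.symm (C X)).natDegree := natDegree_fibre_le _ _ _

theorem natDegree_apply_C_X [Infinite K] : (e (C X)).natDegree = (e.symm (C X)).natDegree :=
  (natDegree_apply_C_X_le e).antisymm (by simpa using natDegree_apply_C_X_le e.symm)

theorem exists_apply_C_X_eq_C_linear [Infinite K] (h : (e (C X)).natDegree = 0) :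
    ∃ a b : K, a ≠ 0 ∧ e (C X) = C (C a * X + C b) := by
  obtain ⟨p, hp⟩ := natDegree_eq_zero.mp h
  obtain ⟨q, hq⟩ := natDegree_eq_zero.mp ((natDegree_apply_C_X e).symm.trans h)
  have hpq : p.comp q = X := C_injective <| calc
    C (p.comp q) = aeval (C q) p := (aeval_algHom_apply CAlgHom q p).symm
    _ = e.symm (C p) := by rw [hq]; exact (e.symm.toAlgHom.apply_C_eq_aeval p).symm
    _ = C X := by rw [hp, e.symm_apply_apply]
  have hp1 : p.natDegree = 1 :=
    Nat.eq_one_of_mul_eq_one_right (by rw [← natDegree_comp, hpq, natDegree_X])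
  refine ⟨p.coeff 1, p.coeff 0, ?_, ?_⟩
  · rw [← hp1, coeff_natDegree, leadingCoeff_ne_zero]
    rintro rfl
    simp at hp1
  · rw [← hp, ← eq_X_add_C_of_natDegree_le_one hp1.le]

theorem exists_leadingCoeff_apply_C_X_eq_C [IsAlgClosed K] (h : (e (C X)).natDegree ≠ 0) :
    ∃ a : K, a ≠ 0 ∧ (e (C X)).leadingCoeff = C a := by
  have hlc : (e (C X)).leadingCoeff ≠ 0 := leadingCoeff_ne_zero.mpr (apply_C_X_ne_zero e)
  have hroot : ∀ x₀, (e (C X)).leadingCoeff.eval x₀ ≠ 0 := by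
    intro x₀ hx₀
    obtain ⟨c, hc⟩ := exists_eval_ne_zero (leadingCoeff_ne_zero.mpr (apply_C_X_ne_zero e.symm))
    have hlt := natDegree_fibre_lt h hx₀ c
    rw [natDegree_fibre_apply_C_X, natDegree_fibre_of_eval_ne_zero hc, ← natDegree_apply_C_X] at hlt
    exact lt_irrefl _ hlt
  have hC := IsAlgClosed.roots_eq_zero_iff.mp <|
    Multiset.eq_zero_of_forall_notMem fun x hx => hroot x ((mem_roots hlc).mp hx)
  exact ⟨_, fun h0 => hlc (by rw [hC, h0, C_0]), hC⟩

theorem degX_apply_C_X [Infinite K] : degX (e (C X)) = (e.symm Y).natDegree := by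
  simpa [natDegree_swap, swap_X] using natDegree_apply_C_X (e.trans swap)

theorem exists_apply_C_X_eq_C_mul_Y_add_C [Infinite K] (h : degX (e (C X)) = 0) :
    ∃ a b : K, a ≠ 0 ∧ e (C X) = C (C a) * Y + C (C b) := by
  obtain ⟨a, b, ha, hab⟩ :=
    exists_apply_C_X_eq_C_linear (e.trans swap) (by simpa [natDegree_swap])
  refine ⟨a, b, ha, ?_⟩
  rw [← swap_swap_apply (e (C X)), ← e.trans_apply swap, hab, swap_C]
  simp

theorem exists_leadX_apply_C_X_eq_C [IsAlgClosed K] (h : degX (e (C X)) ≠ 0) :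
    ∃ a : K, a ≠ 0 ∧ leadX (e (C X)) = C a := by
  simpa [leadX_eq_leadingCoeff_swap, natDegree_swap] using
    exists_leadingCoeff_apply_C_X_eq_C (e.trans swap) (by simpa [natDegree_swap])

end Automorphism

theorem automorphism_degree_relations_general [IsAlgClosed K]
    (σx σy τx τy : Polynomial (Polynomial K))
    (h1 : subst2 τx τy σx = Polynomial.C Polynomial.X)
    (h2 : subst2 τx τy σy = Polynomial.X)
    (h3 : subst2 σx σy τx = Polynomial.C Polynomial.X)
    (h4 : subst2 σx σy τy = Polynomial.X) :
    σx.natDegree = τx.natDegree ∧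
    degX σy = degX τy ∧
    degX σx = τy.natDegree ∧
    σy.natDegree = degX τx ∧
    (σx.natDegree = 0 → ∃ a b : K, a ≠ 0 ∧
      σx = Polynomial.C (Polynomial.C a * Polynomial.X + Polynomial.C b)) ∧
    (σx.natDegree ≠ 0 → ∃ a : K, a ≠ 0 ∧ σx.leadingCoeff = Polynomial.C a) ∧
    (degX σy = 0 → ∃ a b : K, a ≠ 0 ∧
      σy = Polynomial.C (Polynomial.C a) * Polynomial.X + Polynomial.C (Polynomial.C b)) ∧
    (degX σy ≠ 0 → ∃ a : K, a ≠ 0 ∧ leadX σy = Polynomial.C a) ∧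
    (degX σx = 0 → ∃ a b : K, a ≠ 0 ∧
      σx = Polynomial.C (Polynomial.C a) * Polynomial.X + Polynomial.C (Polynomial.C b)) ∧
    (degX σx ≠ 0 → ∃ a : K, a ≠ 0 ∧ leadX σx = Polynomial.C a) ∧
    (σy.natDegree = 0 → ∃ a b : K, a ≠ 0 ∧
      σy = Polynomial.C (Polynomial.C a * Polynomial.X + Polynomial.C b)) ∧
    (σy.natDegree ≠ 0 → ∃ a : K, a ≠ 0 ∧ σy.leadingCoeff = Polynomial.C a) := by
  obtain ⟨e, rfl, rfl, rfl, rfl⟩ := exists_algEquiv_of_subst2 h1 h2 h3 h4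
  have hY : e Y = (swap.trans e) (C X) := by simp [swap_X]
  refine ⟨natDegree_apply_C_X e, ?_, degX_apply_C_X e, ?_,
    exists_apply_C_X_eq_C_linear e, exists_leadingCoeff_apply_C_X_eq_C e, ?_, ?_,
    exists_apply_C_X_eq_C_mul_Y_add_C e, exists_leadX_apply_C_X_eq_C e, ?_, ?_⟩ <;> rw [hY]
  · simpa [natDegree_swap] using degX_apply_C_X (swap.trans e)
  · simpa [natDegree_swap] using natDegree_apply_C_X (swap.trans e)
  · exact exists_apply_C_X_eq_C_mul_Y_add_C _
  · exact exists_leadX_apply_C_X_eq_C _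
  · exact exists_apply_C_X_eq_C_linear _
  · exact exists_leadingCoeff_apply_C_X_eq_C _

/-- Degree relations between the components of a plane polynomial
automorphism and of its inverse, and the shape of the corresponding leading coefficients. -/
theorem automorphism_degree_relations [IsAlgClosed K] [CharZero K]
    (σx σy τx τy : Polynomial (Polynomial K))
    (h1 : subst2 τx τy σx = Polynomial.C Polynomial.X)
    (h2 : subst2 τx τy σy = Polynomial.X)
    (h3 : subst2 σx σy τx = Polynomial.C Polynomial.X)
    (h4 : subst2 σx σy τy = Polynomial.X) :
    σx.natDegree = τx.natDegree ∧
    degX σy = degX τy ∧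
    degX σx = τy.natDegree ∧
    σy.natDegree = degX τx ∧
    (σx.natDegree = 0 → ∃ a b : K, a ≠ 0 ∧
      σx = Polynomial.C (Polynomial.C a * Polynomial.X + Polynomial.C b)) ∧
    (σx.natDegree ≠ 0 → ∃ a : K, a ≠ 0 ∧ σx.leadingCoeff = Polynomial.C a) ∧
    (degX σy = 0 → ∃ a b : K, a ≠ 0 ∧
      σy = Polynomial.C (Polynomial.C a) * Polynomial.X + Polynomial.C (Polynomial.C b)) ∧
    (degX σy ≠ 0 → ∃ a : K, a ≠ 0 ∧ leadX σy = Polynomial.C a) ∧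
    (degX σx = 0 → ∃ a b : K, a ≠ 0 ∧
      σx = Polynomial.C (Polynomial.C a) * Polynomial.X + Polynomial.C (Polynomial.C b)) ∧
    (degX σx ≠ 0 → ∃ a : K, a ≠ 0 ∧ leadX σx = Polynomial.C a) ∧
    (σy.natDegree = 0 → ∃ a b : K, a ≠ 0 ∧
      σy = Polynomial.C (Polynomial.C a * Polynomial.X + Polynomial.C b)) ∧
    (σy.natDegree ≠ 0 → ∃ a : K, a ≠ 0 ∧ σy.leadingCoeff = Polynomial.C a) :=
  automorphism_degree_relations_general σx σy τx τy h1 h2 h3 h4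

end DiscPaper
end
end
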